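/- arXiv:1803.06674 — 3 statements merged into one kernel-verified Lean document; each statement's English description precedes it below -/
import Mathlib

section
/- Given a put function put : S → V → S, there exists at most one get function get : S → V such that (get, put) is well-behaved, i.e., satisfies GetPut (put s (get s) = s for all s) and PutGet (get (put s v) = v for all s, v). Formally, if (get₁, put) and (get₂, put) are both well-behaved, then get₁ = get₂. -/
theorem unique_get_general {S V : Type*} (put : S → V → S) (get₁ get₂ : S → V)
    (h1g : ∀ s v, get₁ (put s v) = v)
    (h2p : ∀ s, put s (get₂ s) = s) :
    get₁ = get₂ :=
  funext fun s => calc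
    get₁ s = get₁ (put s (get₂ s)) := by rw [h2p]
    _ = get₂ s := h1g s (get₂ s)

theorem unique_get {S V : Type*} (put : S → V → S) (get₁ get₂ : S → V)
    (h1p : ∀ s, put s (get₁ s) = s) (h1g : ∀ s v, get₁ (put s v) = v)
    (h2p : ∀ s, put s (get₂ s) = s) (h2g : ∀ s v, get₂ (put s v) = v) :
    get₁ = get₂ :=
  unique_get_general put get₁ get₂ h1g h2p
end

section
/- If put satisfies ViewDetermination and SourceStability, then the witness v in SourceStability is unique: for every s : S, there exists exactly one v : V with put s v = s, and the function get sending s to this unique v satisfies get (put s v) = v and put s (get s) = s; that is, this get is the unique get forming a well-behaved pair with put. -/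
section ViewDetermination

variable {S V : Type*} {put : S → V → S}
  (hvd : ∀ s s' v v', put s v = put s' v' → v = v')
include hvd

theorem put_eq_self_unique {s : S} {v w : V} (hv : put s v = s) (hw : put s w = s) : v = w :=
  hvd s s v w (hv.trans hw.symm)

theorem existsUnique_put_eq_self (hss : ∀ s : S, ∃ v : V, put s v = s) (s : S) :
    ∃! v : V, put s v = s :=
  let ⟨v, hv⟩ := hss s
  ⟨v, hv, fun _ hw => put_eq_self_unique hvd hw hv⟩

theorem get_put_of_put_get {get : S → V} (hget : ∀ s, put s (get s) = s) (s : S) (v : V) :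
    get (put s v) = v :=
  hvd (put s v) s _ v (hget (put s v))

theorem eq_of_put_get {get get' : S → V} (hget : ∀ s, put s (get s) = s)
    (hget' : ∀ s, put s (get' s) = s) : get' = get :=
  funext fun s => put_eq_self_unique hvd (hget' s) (hget s)

end ViewDetermination

theorem unique_witness_get {S V : Type*} (put : S → V → S)
    (hvd : ∀ s s' v v', put s v = put s' v' → v = v')
    (hss : ∀ s : S, ∃ v : V, put s v = s) :
    (∀ s : S, ∃! v : V, put s v = s) ∧
    ∃ get : S → V, (∀ s, put s (get s) = s) ∧ (∀ s v, get (put s v) = v) ∧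
      ∀ get' : S → V, (∀ s, put s (get' s) = s) → (∀ s v, get' (put s v) = v) →
        get' = get := by
  refine ⟨existsUnique_put_eq_self hvd hss, ?_⟩
  choose get hget using hss
  exact ⟨get, hget, get_put_of_put_get hvd hget, fun _ hget' _ => eq_of_put_get hvd hget hget'⟩
end

section
/- If (get, put) is well-behaved and additionally satisfies PutPut (put (put s v) v' = put s v' for all s, v, v'), then the relation s ~ s' defined by 'put s v = s' for some v' partitions S; concretely, the relation s ~ s' iff ∃ v, put s v = s' is an equivalence relation on S. -/
theorem reachability_equiv {S V : Type*} (get : S → V) (put : S → V → S)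
    (hgp : ∀ s, put s (get s) = s) (hpg : ∀ s v, get (put s v) = v)
    (hpp : ∀ s v v', put (put s v) v' = put s v') :
    Equivalence (fun s s' : S => ∃ v : V, put s v = s') := by
  constructor
  · exact fun s => ⟨get s, hgp s⟩
  · rintro s s' ⟨v, rfl⟩
    exact ⟨get s, by rw [hpp, hgp]⟩
  · rintro s s' s'' ⟨v, rfl⟩ ⟨v', rfl⟩
    exact ⟨v', (hpp s v v').symm ▸ rfl⟩
end
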